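/- (Rank-0 base case) Let X be a finite set of clauses and Y* a finite set of clauses (the complements of the members of a DNF set Y), such that there is no literal l with l and l* occurring in distinct clauses of X ∪ Y*. If ⋀X → ⋁Y is valid, then the empty clause belongs to X ∪ Y*; consequently either ⊥ is an interpolant (when ⊥ ∈ X) or ⊤ is an interpolant (when ⊥ ∈ Y*). -/

import Mathlib

/-- Propositional formulas over variables indexed by naturals. -/
inductive PropForm where
  | var : Nat → PropForm
  | fls : PropForm
  | tru : PropForm
  | neg : PropForm → PropForm
  | conj : PropForm → PropForm → PropForm
  | disj : PropForm → PropForm → PropForm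
deriving DecidableEq

/-- Classical Boolean evaluation of a formula under a valuation. -/
def PropForm.eval (v : Nat → Bool) : PropForm → Bool
  | .var n => v n
  | .fls => false
  | .tru => true
  | .neg A => !(A.eval v)
  | .conj A B => A.eval v && B.eval v
  | .disj A B => A.eval v || B.eval v

/-- The propositional variables occurring in a formula. -/
def PropForm.vars : PropForm → Finset Nat
  | .var n => {n}
  | .fls => ∅
  | .tru => ∅
  | .neg A => A.vars
  | .conj A B => A.vars ∪ B.vars
  | .disj A B => A.vars ∪ B.vars

/-- A formula is valid iff true under every valuation. -/
def PropForm.Valid (A : PropForm) : Prop := ∀ v : Nat → Bool, A.eval v = true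

/-- Literals: a variable or its negation. -/
inductive Lit where
  | pos : Nat → Lit
  | neg : Nat → Lit
deriving DecidableEq

/-- The complement of a literal. -/
def Lit.compl : Lit → Lit
  | .pos n => .neg n
  | .neg n => .pos n

/-- The variable of a literal. -/
def Lit.var : Lit → Nat
  | .pos n => n
  | .neg n => n

/-- Evaluation of a literal. -/
def Lit.eval (v : Nat → Bool) : Lit → Bool
  | .pos n => v n
  | .neg n => !(v n)

/-- A literal as a formula. -/
def Lit.toForm : Lit → PropForm
  | .pos n => .var n
  | .neg n => .neg (.var n)

/-- A clause (finite set of literals read disjunctively) is satisfied by `v`. -/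
def clauseSat (v : Nat → Bool) (C : Finset Lit) : Prop := ∃ l ∈ C, l.eval v = true

/-- A conjunction of literals (finite set read conjunctively) is satisfied by `v`. -/
def cubeSat (v : Nat → Bool) (C : Finset Lit) : Prop := ∀ l ∈ C, l.eval v = true

/-!
If no clause of `X ∪ Y*` is empty, make a variable true exactly when it occurs positively in
some clause. Every clause then has a true literal: a negative literal `¬p` can only be false
if `p` occurs in some clause, and since complementary literals never occur in distinct
clauses, that clause is the one containing `¬p`. This valuation satisfies `X` and every `D*`
with `D ∈ Y`, hence falsifies every `D ∈ Y`, contradicting the validity of `⋀X → ⋁Y`.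
-/

@[simp]
theorem Lit.eval_compl (v : Nat → Bool) (l : Lit) : l.compl.eval v = !l.eval v := by
  cases l <;> simp [Lit.compl, Lit.eval]

theorem not_clauseSat_empty (v : Nat → Bool) : ¬ clauseSat v ∅ := by
  simp [clauseSat]

theorem cubeSat_empty (v : Nat → Bool) : cubeSat v ∅ := by
  simp [cubeSat]

theorem not_cubeSat_of_clauseSat_image_compl {v : Nat → Bool} {D : Finset Lit}
    (h : clauseSat v (D.image Lit.compl)) : ¬ cubeSat v D := by
  obtain ⟨_, hl, hcompl⟩ := h
  obtain ⟨l, hlD, rfl⟩ := Finset.mem_image.mp hl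
  intro hD
  simp [hD l hlD] at hcompl

theorem exists_forall_clauseSat {S : Set (Finset Lit)} (hne : ∀ C ∈ S, C.Nonempty)
    (hclash : ∀ l : Lit, ∀ C₁ ∈ S, ∀ C₂ ∈ S, l ∈ C₁ → l.compl ∈ C₂ → C₁ = C₂) :
    ∃ v : Nat → Bool, ∀ C ∈ S, clauseSat v C := by
  classical
  refine ⟨fun n => decide (∃ C ∈ S, Lit.pos n ∈ C), fun C hC => ?_⟩
  obtain ⟨l, hl⟩ := hne C hC
  cases l with
  | pos n => exact ⟨.pos n, hl, by simpa [Lit.eval] using ⟨C, hC, hl⟩⟩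
  | neg n =>
    by_cases hpos : ∃ C' ∈ S, Lit.pos n ∈ C'
    · obtain ⟨C', hC', hn⟩ := hpos
      obtain rfl : C' = C := hclash (.pos n) C' hC' C hC hn hl
      exact ⟨.pos n, hn, by simpa [Lit.eval] using ⟨C', hC', hn⟩⟩
    · exact ⟨.neg n, hl, by simpa [Lit.eval] using hpos⟩

theorem empty_mem_of_valid {X Y : Finset (Finset Lit)}
    (hclash : ∀ l : Lit, ∀ C₁ ∈ X ∪ Y.image (fun D => D.image Lit.compl),
      ∀ C₂ ∈ X ∪ Y.image (fun D => D.image Lit.compl), l ∈ C₁ → l.compl ∈ C₂ → C₁ = C₂)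
    (hvalid : ∀ v : Nat → Bool, (∀ C ∈ X, clauseSat v C) → ∃ D ∈ Y, cubeSat v D) :
    (∅ : Finset Lit) ∈ X ∪ Y.image (fun D => D.image Lit.compl) := by
  by_contra hempty
  have hne : ∀ C ∈ X ∪ Y.image (fun D => D.image Lit.compl), C.Nonempty := fun C hC =>
    Finset.nonempty_iff_ne_empty.mpr fun h => hempty (h ▸ hC)
  obtain ⟨v, hv⟩ := exists_forall_clauseSat hne hclash
  obtain ⟨D, hD, hcube⟩ := hvalid v fun C hC => hv C (Finset.mem_union_left _ hC)
  exact not_cubeSat_of_clauseSat_image_compl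
    (hv _ (Finset.mem_union_right _ (Finset.mem_image_of_mem _ hD))) hcube

theorem stmt8 (X Y : Finset (Finset Lit))
    (hrank0 : ¬ ∃ l : Lit, ∃ C₁ ∈ X ∪ Y.image (fun D => D.image Lit.compl),
      ∃ C₂ ∈ X ∪ Y.image (fun D => D.image Lit.compl),
        C₁ ≠ C₂ ∧ l ∈ C₁ ∧ l.compl ∈ C₂)
    (hvalid : ∀ v : Nat → Bool, (∀ C ∈ X, clauseSat v C) → ∃ D ∈ Y, cubeSat v D) :
    (∅ : Finset Lit) ∈ X ∪ Y.image (fun D => D.image Lit.compl) ∧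
    ((∅ : Finset Lit) ∈ X →
      (∀ v : Nat → Bool, (∀ C ∈ X, clauseSat v C) → (PropForm.fls.eval v = true)) ∧
      (∀ v : Nat → Bool, PropForm.fls.eval v = true → ∃ D ∈ Y, cubeSat v D)) ∧
    ((∅ : Finset Lit) ∈ Y.image (fun D => D.image Lit.compl) →
      (∀ v : Nat → Bool, (∀ C ∈ X, clauseSat v C) → (PropForm.tru.eval v = true)) ∧
      (∀ v : Nat → Bool, PropForm.tru.eval v = true → ∃ D ∈ Y, cubeSat v D)) := by
  have hempty := empty_mem_of_valid (fun l C₁ h₁ C₂ h₂ hl hl' =>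
    by_contra fun hne => hrank0 ⟨l, C₁, h₁, C₂, h₂, hne, hl, hl'⟩) hvalid
  refine ⟨hempty, fun hX => ⟨fun v hv => ?_, fun v h => ?_⟩,
    fun hY => ⟨fun _ _ => rfl, fun v _ => ?_⟩⟩
  · exact absurd (hv ∅ hX) (not_clauseSat_empty v)
  · cases h
  · obtain ⟨D, hD, hDe⟩ := Finset.mem_image.mp hY
    exact ⟨D, hD, Finset.image_eq_empty.mp hDe ▸ cubeSat_empty v⟩
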